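/- The pull-back construction yields a Lie algebroid: given a generalized Lie algebroid ((F,ν,N),[,]_{F,h},(ρ,η)) with h: M → N, the pull-back bundle (h*F, h*ν, M) with anchor ρ^{h*F}(Z^α T_α) = (Z^α · (ρ^i_α ∘ h)) ∂/∂x^i and bracket determined by [T_α,T_β] = (L^γ_{αβ}∘h) T_γ together with the Leibniz rule [T_α, f T_β] = f (L^γ_{αβ}∘h) T_γ + (ρ^i_α∘h)(∂f/∂x^i) T_β is a Lie algebroid over M. -/

import Mathlib

/-!
The bracket on `Γ(h*F) = Fin p → F(M)` is forced by the Leibniz rule: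
`[Z, W]^ε = Z^α W^β (L^ε_{αβ} ∘ h) + ρ(Z)(W^ε) - ρ(W)(Z^ε)`, and its additivity, antisymmetry and
Leibniz rule are immediate. The defects of the anchor being a bracket morphism and of the Jacobi
identity are `F(M)`-multilinear, so they only need to vanish on the frame `T_α`. There the first
is the closure relation `[X_α, X_β] = (L^γ_{αβ} ∘ h) X_γ`, and the second is the pull-back of the
Jacobi identity of `[,]_{F,h}` on the frame `t_α`: pulling back sections intertwines `[t_α, -]`
with `[T_α, -]`, because the anchor of `t_α` pulls back to `X_α`.
-/

open scoped BigOperators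

section Preamble

universe u v

/-- Abstract model of a generalized Lie algebroid: the `R`-module `M` plays the role of the
module of sections `Γ(F)` over the function ring `R = F(N)`, `bracket` is `[,]_{F,h}` and
`anchor` is the action of `Γ(Th∘ρ, h∘η)` on functions. -/
structure GenLieAlgebroid (R : Type u) (M : Type v) [CommRing R] [AddCommGroup M]
    [Module R M] where
  bracket : M → M → M
  anchor : M → R → R
  bracket_add_left : ∀ u v w, bracket (u + v) w = bracket u w + bracket v w
  bracket_antisymm : ∀ u v, bracket u v = - bracket v u
  jacobi : ∀ u v w, bracket u (bracket v w) = bracket (bracket u v) w + bracket v (bracket u w)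
  leibniz : ∀ (u : M) (f : R) (v : M), bracket u (f • v) = f • bracket u v + anchor u f • v
  anchor_add : ∀ u v f, anchor (u + v) f = anchor u f + anchor v f
  anchor_smul : ∀ (g : R) u f, anchor (g • u) f = g * anchor u f
  anchor_map_add : ∀ u f g, anchor u (f + g) = anchor u f + anchor u g
  anchor_map_mul : ∀ u f g, anchor u (f * g) = f * anchor u g + g * anchor u f
  anchor_bracket : ∀ u v f,
    anchor (bracket u v) f = anchor u (anchor v f) - anchor v (anchor u f)

variable {R : Type u} {M : Type v} [CommRing R] [AddCommGroup M] [Module R M]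

/-- `ω` is a differential `q`-form: multilinear and alternating (sign under permutations). -/
def IsForm {q : ℕ} (ω : (Fin q → M) → R) : Prop :=
  (∀ (z : Fin q → M) (i : Fin q) (x y : M),
      ω (Function.update z i (x + y)) = ω (Function.update z i x) + ω (Function.update z i y)) ∧
  (∀ (z : Fin q → M) (i : Fin q) (c : R) (x : M),
      ω (Function.update z i (c • x)) = c * ω (Function.update z i x)) ∧
  (∀ (z : Fin q → M) (σ : Equiv.Perm (Fin q)),
      ω (z ∘ σ) = ((Equiv.Perm.sign σ : ℤˣ) : ℤ) • ω z)

/-- The exterior (shuffle) product of a `q`-form and an `r`-form: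
`(ω ∧ θ)(z₁,…,z_{q+r}) = Σ_{(q,r)-shuffles σ} sgn(σ) ω(z_{σ(1)},…) θ(z_{σ(q+1)},…)`,
equal to `(1/(q!r!)) Σ_{σ ∈ Σ_{q+r}} sgn(σ) ω(…) θ(…)`. -/
def wedge {q r : ℕ} (ω : (Fin q → M) → R) (θ : (Fin r → M) → R) :
    (Fin (q + r) → M) → R := fun z =>
  ∑ σ : Equiv.Perm (Fin (q + r)),
    if (∀ i j : Fin q, i < j → σ (Fin.castAdd r i) < σ (Fin.castAdd r j)) ∧
        (∀ i j : Fin r, i < j → σ (Fin.natAdd q i) < σ (Fin.natAdd q j)) then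
      ((Equiv.Perm.sign σ : ℤˣ) : ℤ) •
        (ω (fun i => z (σ (Fin.castAdd r i))) * θ (fun j => z (σ (Fin.natAdd q j))))
    else 0

/-- The covariant Lie derivative along a section `z`:
`(L_z ω)(z₁,…,z_q) = a(z)(ω(z₁,…,z_q)) − Σ_i ω(z₁,…,[z,z_i],…,z_q)`. -/
def lieDeriv (A : GenLieAlgebroid R M) (z : M) {q : ℕ} (ω : (Fin q → M) → R) :
    (Fin q → M) → R := fun zs =>
  A.anchor z (ω zs) - ∑ i : Fin q, ω (Function.update zs i (A.bracket z (zs i)))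

/-- Interior product: `(i_z ω)(z₂,…,z_q) = ω(z, z₂,…,z_q)`, with `i_z f = 0` on `0`-forms. -/
def iProd (z : M) {q : ℕ} (ω : (Fin q → M) → R) : (Fin (q - 1) → M) → R :=
  match q, ω with
  | 0, _ => fun _ => 0
  | _ + 1, ω => fun zs => ω (Fin.cons z zs)

/-- The exterior differentiation operator (Chevalley–Eilenberg formula):
`(dω)(z₀,…,z_q) = Σ_i (−1)^i a(z_i)(ω(…,ẑ_i,…)) + Σ_{i<j} (−1)^{i+j} ω([z_i,z_j],…,ẑ_i,…,ẑ_j,…)`. -/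
def extDerivGLA (A : GenLieAlgebroid R M) {q : ℕ} (ω : (Fin q → M) → R) :
    (Fin (q + 1) → M) → R := fun z =>
  (∑ i : Fin (q + 1), (-1 : R) ^ (i : ℕ) * A.anchor (z i) (ω (z ∘ i.succAbove)))
    + ∑ j : Fin (q + 1), ∑ i : Fin (q + 1),
        if _hij : i < j then
          (-1 : R) ^ ((i : ℕ) + (j : ℕ)) *
            ω (fun k =>
              if _hk : (k : ℕ) = 0 then A.bracket (z i) (z j)
              else
                z ⟨if (k : ℕ) - 1 < (i : ℕ) then (k : ℕ) - 1
                    else if (k : ℕ) < (j : ℕ) then (k : ℕ) else (k : ℕ) + 1,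
                  by
                    have h1 := k.isLt
                    have h2 := j.isLt
                    split_ifs <;> omega⟩)
        else 0

end Preamble

theorem eq_zero_of_pi_single_eq_zero {ι R N : Type*} [Finite ι] [DecidableEq ι] [CommSemiring R]
    [AddCommMonoid N] [Module R N] (f : (ι → R) → N) (hadd : ∀ x y, f (x + y) = f x + f y)
    (hsmul : ∀ (c : R) x, f (c • x) = c • f x) (hsingle : ∀ i, f (Pi.single i 1) = 0)
    (x : ι → R) : f x = 0 := by
  let F : (ι → R) →ₗ[R] N := ⟨⟨f, hadd⟩, hsmul⟩
  have hF : F = 0 := (Pi.basisFun R ι).ext fun i => by simpa [F] using hsingle i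
  exact LinearMap.congr_fun hF x

namespace GenLieAlgebroid

variable {R M : Type*} [CommRing R] [AddCommGroup M] [Module R M] (A : GenLieAlgebroid R M)

theorem bracket_add_right (u v w : M) :
    A.bracket u (v + w) = A.bracket u v + A.bracket u w := by
  rw [A.bracket_antisymm, A.bracket_add_left, neg_add, ← A.bracket_antisymm,
    ← A.bracket_antisymm]

theorem bracket_sum_right {ι : Type*} (u : M) (s : Finset ι) (v : ι → M) :
    A.bracket u (∑ i ∈ s, v i) = ∑ i ∈ s, A.bracket u (v i) :=
  map_sum (AddMonoidHom.mk' (A.bracket u) (A.bracket_add_right u)) v s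

variable {ι : Type*} [Fintype ι] (b : Module.Basis ι R M) {L : ι → ι → ι → R}

theorem structureFun_antisymm (hL : ∀ α β, A.bracket (b α) (b β) = ∑ γ, L γ α β • b γ)
    (γ α β : ι) : L γ α β = -L γ β α := by
  classical
  simpa [hL, Finsupp.single_apply] using
    congrArg (fun v => b.repr v γ) (A.bracket_antisymm (b α) (b β))

theorem map_structureFun_antisymm {S : Type*} [CommRing S] (φ : R →+* S)
    (hL : ∀ α β, A.bracket (b α) (b β) = ∑ γ, L γ α β • b γ) (ε α β : ι) :
    φ (L ε α β) = -φ (L ε β α) := by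
  rw [A.structureFun_antisymm b hL, map_neg]

theorem repr_bracket_basis_left (hL : ∀ α β, A.bracket (b α) (b β) = ∑ γ, L γ α β • b γ)
    (α : ι) (v : M) (ε : ι) :
    b.repr (A.bracket (b α) v) ε = ∑ δ, b.repr v δ * L ε α δ + A.anchor (b α) (b.repr v ε) := by
  classical
  rw [← b.sum_repr v]
  simp only [A.bracket_sum_right, A.leibniz, hL]
  simp [Finsupp.single_apply, Finset.sum_add_distrib]

end GenLieAlgebroid

namespace PullbackAlgebroid

section

variable {ι S RM : Type*} [Fintype ι] [CommRing S] [CommRing RM] [Algebra S RM]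
  (C : ι → ι → ι → RM) (D : ι → Derivation S RM RM)

def anchor (Z : ι → RM) : Derivation S RM RM := ∑ α, Z α • D α

def bracket (Z W : ι → RM) : ι → RM := fun ε =>
  ∑ α, ∑ β, Z α * W β * C ε α β + anchor D Z (W ε) - anchor D W (Z ε)

def jacobiator (U V W : ι → RM) : ι → RM :=
  bracket C D U (bracket C D V W) - bracket C D (bracket C D U V) W -
    bracket C D V (bracket C D U W)

theorem anchor_apply (Z : ι → RM) (g : RM) : anchor D Z g = ∑ α, Z α * D α g := by
  rw [anchor, ← Derivation.coeFnAddMonoidHom_apply, map_sum, Finset.sum_apply]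
  simp

theorem anchor_add (Z W : ι → RM) : anchor D (Z + W) = anchor D Z + anchor D W := by
  simp [anchor, add_smul, Finset.sum_add_distrib]

theorem anchor_neg (Z : ι → RM) : anchor D (-Z) = -anchor D Z :=
  map_neg (AddMonoidHom.mk' (anchor D) (anchor_add D)) Z

theorem anchor_smul (c : RM) (Z : ι → RM) : anchor D (c • Z) = c • anchor D Z := by
  simp [anchor, Finset.smul_sum, smul_smul]

theorem bracket_add_left (Z Z' W : ι → RM) :
    bracket C D (Z + Z') W = bracket C D Z W + bracket C D Z' W := by
  funext ε
  simp only [bracket, anchor_add, Pi.add_apply, Derivation.add_apply, map_add, add_mul,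
    Finset.sum_add_distrib]
  ring

theorem bracket_add_right (Z W W' : ι → RM) :
    bracket C D Z (W + W') = bracket C D Z W + bracket C D Z W' := by
  funext ε
  simp only [bracket, anchor_add, Pi.add_apply, Derivation.add_apply, map_add, mul_add,
    add_mul, Finset.sum_add_distrib]
  ring

theorem bracket_neg_right (Z W : ι → RM) : bracket C D Z (-W) = -bracket C D Z W :=
  map_neg (AddMonoidHom.mk' (bracket C D Z) (bracket_add_right C D Z)) W

theorem bracket_smul_right (Z : ι → RM) (c : RM) (W : ι → RM) :
    bracket C D Z (c • W) = c • bracket C D Z W + anchor D Z c • W := by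
  funext ε
  have hsum : ∑ α, ∑ β, Z α * (c * W β) * C ε α β = c * ∑ α, ∑ β, Z α * W β * C ε α β := by
    simp only [Finset.mul_sum]
    exact Finset.sum_congr rfl fun α _ => Finset.sum_congr rfl fun β _ => by ring
  simp only [bracket, anchor_smul, Pi.add_apply, Pi.smul_apply, Derivation.smul_apply,
    Derivation.leibniz, smul_eq_mul, hsum]
  ring

variable {C} in
theorem bracket_antisymm (hC : ∀ ε α β, C ε α β = -C ε β α) (Z W : ι → RM) :
    bracket C D Z W = -bracket C D W Z := by
  funext ε
  have hsum : ∑ α, ∑ β, Z α * W β * C ε α β = -∑ α, ∑ β, W α * Z β * C ε α β := by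
    rw [Finset.sum_comm (f := fun α β => W α * Z β * C ε α β)]
    simp only [← Finset.sum_neg_distrib]
    refine Finset.sum_congr rfl fun α _ => Finset.sum_congr rfl fun β _ => ?_
    rw [hC ε α β]
    ring
  simp only [bracket, Pi.neg_apply, hsum]
  ring

section Frame

variable [DecidableEq ι]

theorem anchor_single (α : ι) : anchor D (Pi.single α 1) = D α := by
  simp [anchor, Pi.single_apply]

theorem bracket_single_left (α : ι) (W : ι → RM) (ε : ι) :
    bracket C D (Pi.single α 1) W ε = ∑ δ, W δ * C ε α δ + D α (W ε) := by
  simp [bracket, anchor_single, anchor_apply, Pi.single_apply, apply_ite]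

theorem bracket_single_single (α β : ι) :
    bracket C D (Pi.single α 1) (Pi.single β 1) = fun ε => C ε α β := by
  funext ε
  simp [bracket_single_left, Pi.single_apply, apply_ite]

end Frame

variable {C}

theorem anchor_bracket (hC : ∀ ε α β, C ε α β = -C ε β α)
    (hclose : ∀ α β g, D α (D β g) - D β (D α g) = ∑ γ, C γ α β * D γ g)
    (U V : ι → RM) (g : RM) :
    anchor D (bracket C D U V) g = anchor D U (anchor D V g) - anchor D V (anchor D U g) := by
  classical
  set δ : (ι → RM) → (ι → RM) → RM := fun U V =>
    anchor D (bracket C D U V) g - (anchor D U (anchor D V g) - anchor D V (anchor D U g))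
    with hδ
  have hanti : ∀ U V, δ U V = -δ V U := by
    intro U V
    simp only [hδ, bracket_antisymm D hC U V, anchor_neg, Derivation.neg_apply]
    ring
  have hadd : ∀ U V V', δ U (V + V') = δ U V + δ U V' := by
    intro U V V'
    simp only [hδ, bracket_add_right, anchor_add, Derivation.add_apply, map_add]
    ring
  have hsmul : ∀ U (c : RM) V, δ U (c • V) = c • δ U V := by
    intro U c V
    simp only [hδ, bracket_smul_right, anchor_add, anchor_smul, Derivation.add_apply,
      Derivation.smul_apply, Derivation.leibniz, smul_eq_mul]
    ring
  have hframe : ∀ α β, δ (Pi.single α 1) (Pi.single β 1) = 0 := by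
    intro α β
    simp only [hδ, bracket_single_single, anchor_single]
    rw [anchor_apply, hclose, sub_self]
  have hleft : ∀ α V, δ (Pi.single α 1) V = 0 := fun α =>
    eq_zero_of_pi_single_eq_zero _ (hadd _) (hsmul _) (hframe α)
  have hzero : δ U V = 0 := by
    rw [hanti, neg_eq_zero]
    exact eq_zero_of_pi_single_eq_zero _ (hadd V) (hsmul V)
      (fun α => by rw [hanti, hleft, neg_zero]) U
  exact sub_eq_zero.mp hzero

theorem jacobiator_cyclic (hC : ∀ ε α β, C ε α β = -C ε β α) (U V W : ι → RM) :
    jacobiator C D U V W = jacobiator C D V W U := by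
  have hsum : ∀ U V W, jacobiator C D U V W = bracket C D U (bracket C D V W)
      + bracket C D V (bracket C D W U) + bracket C D W (bracket C D U V) := by
    intro U V W
    rw [jacobiator, bracket_antisymm D hC (bracket C D U V) W, bracket_antisymm D hC U W,
      bracket_neg_right]
    abel
  rw [hsum, hsum]
  abel

variable (C) in
theorem jacobiator_add_right (U V W W' : ι → RM) :
    jacobiator C D U V (W + W') = jacobiator C D U V W + jacobiator C D U V W' := by
  simp only [jacobiator, bracket_add_right]
  abel

theorem jacobiator_smul_right (hC : ∀ ε α β, C ε α β = -C ε β α)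
    (hclose : ∀ α β g, D α (D β g) - D β (D α g) = ∑ γ, C γ α β * D γ g)
    (U V : ι → RM) (c : RM) (W : ι → RM) :
    jacobiator C D U V (c • W) = c • jacobiator C D U V W := by
  simp only [jacobiator, bracket_smul_right, bracket_add_right, anchor_bracket D hC hclose]
  module

theorem jacobiator_eq_zero [DecidableEq ι] (hC : ∀ ε α β, C ε α β = -C ε β α)
    (hclose : ∀ α β g, D α (D β g) - D β (D α g) = ∑ γ, C γ α β * D γ g)
    (hjac : ∀ α β γ, jacobiator C D (Pi.single α 1) (Pi.single β 1) (Pi.single γ 1) = 0)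
    (U V W : ι → RM) : jacobiator C D U V W = 0 := by
  have tensorial : ∀ U V, (∀ γ, jacobiator C D U V (Pi.single γ 1) = 0) →
      ∀ W, jacobiator C D U V W = 0 := fun U V =>
    eq_zero_of_pi_single_eq_zero _ (jacobiator_add_right C D U V)
      (jacobiator_smul_right D hC hclose U V)
  have frame₂ : ∀ α β W, jacobiator C D (Pi.single α 1) (Pi.single β 1) W = 0 :=
    fun α β => tensorial _ _ (hjac α β)
  have frame₁ : ∀ α V W, jacobiator C D (Pi.single α 1) V W = 0 := by
    intro α V W
    rw [← jacobiator_cyclic D hC W]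
    exact tensorial _ _ (fun β => by rw [jacobiator_cyclic D hC, frame₂]) V
  rw [jacobiator_cyclic D hC]
  exact tensorial _ _ (fun α => by rw [← jacobiator_cyclic D hC, frame₁]) U

def genLieAlgebroid [DecidableEq ι] (hC : ∀ ε α β, C ε α β = -C ε β α)
    (hclose : ∀ α β g, D α (D β g) - D β (D α g) = ∑ γ, C γ α β * D γ g)
    (hjac : ∀ α β γ, jacobiator C D (Pi.single α 1) (Pi.single β 1) (Pi.single γ 1) = 0) :
    GenLieAlgebroid RM (ι → RM) where
  bracket := bracket C D
  anchor Z g := anchor D Z g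
  bracket_add_left := bracket_add_left C D
  bracket_antisymm := bracket_antisymm D hC
  jacobi U V W := by
    have h := jacobiator_eq_zero D hC hclose hjac U V W
    rwa [jacobiator, sub_sub, sub_eq_zero] at h
  leibniz := bracket_smul_right C D
  anchor_add Z W g := by rw [anchor_add]; rfl
  anchor_smul c Z g := by rw [anchor_smul]; rfl
  anchor_map_add Z := map_add (anchor D Z)
  anchor_map_mul Z := Derivation.leibniz (anchor D Z)
  anchor_bracket := anchor_bracket D hC hclose

end

section

variable {ι S RN RM MN : Type*} [CommRing S] [CommRing RN] [CommRing RM]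
  [Algebra S RM] [AddCommGroup MN] [Module RN MN]

/-- A section `v` of `F` pulled back to `M`, written in the induced frame `T_α = Pi.single α 1`. -/
noncomputable def coord (b : Module.Basis ι RN MN) (φ : RN →+* RM) (v : MN) : ι → RM :=
  fun γ => φ (b.repr v γ)

variable (b : Module.Basis ι RN MN) (φ : RN →+* RM)

theorem coord_add (v w : MN) : coord b φ (v + w) = coord b φ v + coord b φ w := by
  funext γ
  simp [coord]

theorem coord_neg (v : MN) : coord b φ (-v) = -coord b φ v := by
  funext γ
  simp [coord]

variable [DecidableEq ι]

theorem coord_basis (β : ι) : coord b φ (b β) = Pi.single β 1 := by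
  funext γ
  simp only [coord, Module.Basis.repr_self]
  rw [Finsupp.apply_single φ, map_one, Finsupp.single_eq_pi_single]

variable [Fintype ι] (A : GenLieAlgebroid RN MN) {L : ι → ι → ι → RN}
  (D : ι → Derivation S RM RM)

theorem coord_bracket_basis_left (hL : ∀ α β, A.bracket (b α) (b β) = ∑ γ, L γ α β • b γ)
    (hcompat : ∀ α f, φ (A.anchor (b α) f) = D α (φ f)) (α : ι) (v : MN) :
    coord b φ (A.bracket (b α) v) =
      bracket (fun γ α β => φ (L γ α β)) D (Pi.single α 1) (coord b φ v) := by
  funext ε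
  simp [coord, bracket_single_left, A.repr_bracket_basis_left b hL, hcompat]

theorem jacobiator_single_eq_zero (hL : ∀ α β, A.bracket (b α) (b β) = ∑ γ, L γ α β • b γ)
    (hcompat : ∀ α f, φ (A.anchor (b α) f) = D α (φ f)) (α β γ : ι) :
    jacobiator (fun γ α β => φ (L γ α β)) D (Pi.single α 1) (Pi.single β 1) (Pi.single γ 1)
      = 0 := by
  have h := congrArg (coord b φ) (A.jacobi (b α) (b β) (b γ))
  rw [A.bracket_antisymm (A.bracket (b α) (b β))] at h
  simp only [coord_add, coord_neg, coord_bracket_basis_left b φ A D hL hcompat, coord_basis] at h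
  rw [jacobiator, bracket_antisymm D (A.map_structureFun_antisymm b φ hL)
    (bracket _ D _ _) (Pi.single γ 1), h]
  abel

end

end PullbackAlgebroid

/-- `RN = F(N)`, `RM = F(M)`, `φ` is `f ↦ f ∘ h`, `MN = Γ(F)` with frame `b` and structure
functions `Lstr`, `X α` is the vector field `(ρ^i_α ∘ h) ∂/∂x^i` on `M`, and
`Γ(h*F) ≅ Fin p → F(M)` with `T_α = Pi.single α 1`. -/
theorem pullback_is_lie_algebroid {RN RM MN : Type*} [CommRing RN] [CommRing RM]
    [AddCommGroup MN] [Module RN MN] {p : ℕ}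
    (A : GenLieAlgebroid RN MN) (b : Module.Basis (Fin p) RN MN)
    (Lstr : Fin p → Fin p → Fin p → RN)
    (hL : ∀ α β, A.bracket (b α) (b β) = ∑ γ, Lstr γ α β • b γ)
    (φ : RN →+* RM)
    (X : Fin p → RM → RM)
    (hXadd : ∀ α f g, X α (f + g) = X α f + X α g)
    (hXderiv : ∀ α f g, X α (f * g) = f * X α g + g * X α f)
    (hcompat : ∀ α f, φ (A.anchor (b α) f) = X α (φ f))
    (hclose : ∀ α β g, X α (X β g) - X β (X α g) = ∑ γ, φ (Lstr γ α β) * X γ g) :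
    ∃ B : GenLieAlgebroid RM (Fin p → RM),
      (∀ (Z : Fin p → RM) (g : RM), B.anchor Z g = ∑ α, Z α * X α g) ∧
      (∀ α β, B.bracket (Pi.single α 1) (Pi.single β 1) = fun γ => φ (Lstr γ α β)) := by
  let D : Fin p → Derivation ℤ RM RM := fun α =>
    Derivation.mk' (AddMonoidHom.mk' (X α) (hXadd α)).toIntLinearMap (hXderiv α)
  have hC := A.map_structureFun_antisymm b φ hL
  have hjac := PullbackAlgebroid.jacobiator_single_eq_zero b φ A D hL hcompat
  exact ⟨PullbackAlgebroid.genLieAlgebroid D hC hclose hjac,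
    PullbackAlgebroid.anchor_apply D, PullbackAlgebroid.bracket_single_single _ D⟩
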